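/- arXiv:1903.01313 — 9 statements merged into one kernel-verified Lean document; each statement's English description precedes it below -/
import Mathlib

section
/- For the Tribonacci numbers, the determinant det[[T(n+2),T(n+1),T(n)],[T(n+1),T(n),T(n-1)],[T(n),T(n-1),T(n-2)]] equals −1 for all integers n. -/
/-!
Shifting the window of three consecutive rows by one step multiplies it on the left by the
companion matrix `!![1, 1, 1; 1, 0, 0; 0, 1, 0]` of the recurrence, whose determinant is `1`.
So the determinant does not depend on `n`, and at `n = 0` it is `-1`.
-/

open Matrix

section

variable {R : Type*} [CommRing R]

def tribonacciHankel (a : ℤ → R) (n : ℤ) : Matrix (Fin 3) (Fin 3) R :=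
  !![a (n + 2), a (n + 1), a n;
     a (n + 1), a n, a (n - 1);
     a n, a (n - 1), a (n - 2)]

def tribonacciCompanion : Matrix (Fin 3) (Fin 3) R :=
  !![1, 1, 1; 1, 0, 0; 0, 1, 0]

theorem det_tribonacciCompanion : (tribonacciCompanion : Matrix (Fin 3) (Fin 3) R).det = 1 := by
  simp [tribonacciCompanion, det_fin_three]

theorem tribonacciHankel_add_one (a : ℤ → R)
    (hrec : ∀ n : ℤ, a n = a (n - 1) + a (n - 2) + a (n - 3)) (n : ℤ) :
    tribonacciHankel a (n + 1) = tribonacciCompanion * tribonacciHankel a n := by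
  rw [tribonacciHankel, tribonacciHankel, tribonacciCompanion, mul_fin_three]
  simp only [one_mul, zero_mul, add_zero, zero_add]
  -- entrywise: the first row is the recurrence, the other entries are index arithmetic
  congr 5 <;> first | (ring_nf; done) | (rw [hrec]; ring_nf)

theorem det_tribonacciHankel_eq (a : ℤ → R)
    (hrec : ∀ n : ℤ, a n = a (n - 1) + a (n - 2) + a (n - 3)) (n : ℤ) :
    (tribonacciHankel a n).det = (tribonacciHankel a 0).det := by
  have hperiodic : Function.Periodic (fun k ↦ (tribonacciHankel a k).det) 1 := fun k ↦ by
    simp [tribonacciHankel_add_one a hrec, det_tribonacciCompanion]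
  simpa using hperiodic.int_mul n 0

end

theorem tribonacci_det (T : ℤ → ℤ) (h0 : T 0 = 0) (h1 : T 1 = 1) (h2 : T 2 = 1)
    (hrec : ∀ n : ℤ, T n = T (n - 1) + T (n - 2) + T (n - 3)) :
    ∀ n : ℤ,
      Matrix.det !![T (n + 2), T (n + 1), T n;
                    T (n + 1), T n, T (n - 1);
                    T n, T (n - 1), T (n - 2)] = -1 := by
  have hm1 : T (-1) = 0 := by simpa [h0, h1, h2] using hrec 2
  have hm2 : T (-2) = 1 := by simpa [h0, h1, hm1] using (hrec 1).symm
  intro n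
  change (tribonacciHankel T n).det = -1
  rw [det_tribonacciHankel_eq T hrec n]
  simp [tribonacciHankel, det_fin_three, h0, h1, h2, hm1, hm2]
end

section
/- For the Padovan numbers, the determinant det[[P(n+2),P(n+1),P(n)],[P(n+1),P(n),P(n-1)],[P(n),P(n-1),P(n-2)]] equals −1 for all integers n. -/
/-!
The Hankel matrix `M n = (P (n + 2 - i - j))ᵢⱼ` of three consecutive windows of the sequence
satisfies `M (n + 1) = C * M n` for the companion matrix `C` of `x³ = x + 1`, and `det C = 1`.
So `det (M n)` does not depend on `n`, and at `n = 0` it is `-1`.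
-/

namespace Padovan

variable {R : Type*} [CommRing R]

def hankel (P : ℤ → R) (n : ℤ) : Matrix (Fin 3) (Fin 3) R :=
  !![P (n + 2), P (n + 1), P n;
     P (n + 1), P n, P (n - 1);
     P n, P (n - 1), P (n - 2)]

def companion : Matrix (Fin 3) (Fin 3) R :=
  !![0, 1, 1;
     1, 0, 0;
     0, 1, 0]

theorem det_companion : (companion : Matrix (Fin 3) (Fin 3) R).det = 1 := by
  simp [companion, Matrix.det_fin_three]

theorem hankel_add_one {P : ℤ → R} (hrec : ∀ n : ℤ, P n = P (n - 2) + P (n - 3)) (n : ℤ) :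
    hankel P (n + 1) = companion * hankel P n := by
  have h3 : P (n + 3) = P (n + 1) + P n := by rw [hrec (n + 3)]; ring_nf
  have h2 : P (n + 2) = P n + P (n - 1) := by rw [hrec (n + 2)]; ring_nf
  have h1 : P (n + 1) = P (n - 1) + P (n - 2) := by rw [hrec (n + 1)]; ring_nf
  rw [hankel, hankel, companion, Matrix.mul_fin_three]
  simp only [zero_mul, one_mul, zero_add, add_zero, add_sub_cancel_right]
  rw [← h3, ← h2, ← h1, show n + 1 + 2 = n + 3 by ring, show n + 1 + 1 = n + 2 by ring,
    show n + 1 - 2 = n - 1 by ring]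

theorem det_hankel_add_one {P : ℤ → R} (hrec : ∀ n : ℤ, P n = P (n - 2) + P (n - 3)) (n : ℤ) :
    (hankel P (n + 1)).det = (hankel P n).det := by
  rw [hankel_add_one hrec, Matrix.det_mul, det_companion, one_mul]

theorem det_hankel_eq_det_hankel_zero {P : ℤ → R}
    (hrec : ∀ n : ℤ, P n = P (n - 2) + P (n - 3)) (n : ℤ) :
    (hankel P n).det = (hankel P 0).det := by
  induction n using Int.induction_on with
  | zero => rfl
  | succ i ih => rw [det_hankel_add_one hrec, ih]
  | pred i ih => rw [← ih, ← det_hankel_add_one hrec, sub_add_cancel]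

end Padovan

theorem padovan_det (P : ℤ → ℤ) (h0 : P 0 = 1) (h1 : P 1 = 1) (h2 : P 2 = 1)
    (hrec : ∀ n : ℤ, P n = P (n - 2) + P (n - 3)) :
    ∀ n : ℤ,
      Matrix.det !![P (n + 2), P (n + 1), P n;
                    P (n + 1), P n, P (n - 1);
                    P n, P (n - 1), P (n - 2)] = -1 := by
  have hm1 : P (-1) = 0 := by
    have h := hrec 2
    norm_num [h0, h2] at h
    linarith
  have hm2 : P (-2) = 1 := by
    have h := hrec 1
    norm_num [h1, hm1] at h
    linarith
  intro n
  rw [← Padovan.hankel, Padovan.det_hankel_eq_det_hankel_zero hrec]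
  simp [Padovan.hankel, Matrix.det_fin_three, h0, h1, h2, hm1, hm2]
end

section
/- For the Perrin numbers, the determinant det[[Q(n+2),Q(n+1),Q(n)],[Q(n+1),Q(n),Q(n-1)],[Q(n),Q(n-1),Q(n-2)]] equals −23 for all integers n. -/
/-!
Shifting the index multiplies the Hankel matrix of a sequence satisfying
`Q n = Q (n - 2) + Q (n - 3)` on the right by the companion matrix of `X ^ 3 - X - 1`,
whose determinant is `1`. So the determinant is independent of `n`, and at `n = 0`
it is evaluated from `Q (-2), …, Q 2 = 1, -1, 3, 0, 2`.
-/

open Matrix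

section Hankel

variable {R : Type*} [CommRing R]

def hankel3 (Q : ℤ → R) (n : ℤ) : Matrix (Fin 3) (Fin 3) R :=
  !![Q (n + 2), Q (n + 1), Q n;
     Q (n + 1), Q n, Q (n - 1);
     Q n, Q (n - 1), Q (n - 2)]

def perrinCompanion : Matrix (Fin 3) (Fin 3) R :=
  !![0, 1, 0;
     1, 0, 1;
     1, 0, 0]

theorem det_perrinCompanion : (perrinCompanion : Matrix (Fin 3) (Fin 3) R).det = 1 := by
  simp [perrinCompanion, det_fin_three]

theorem hankel3_add_one {Q : ℤ → R} (hrec : ∀ n : ℤ, Q n = Q (n - 2) + Q (n - 3)) (n : ℤ) :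
    hankel3 Q (n + 1) = hankel3 Q n * perrinCompanion := by
  have e3 := hrec (n + 3)
  have e2 := hrec (n + 2)
  have e1 := hrec (n + 1)
  ring_nf at e1 e2 e3
  ext i j
  fin_cases i <;> fin_cases j <;>
    simp [hankel3, perrinCompanion, mul_apply, Fin.sum_univ_three] <;> ring_nf <;>
    simp only [e1, e2, e3] <;> ring

theorem det_hankel3_eq_det_hankel3_zero {Q : ℤ → R} (hrec : ∀ n : ℤ, Q n = Q (n - 2) + Q (n - 3)) (n : ℤ) :
    (hankel3 Q n).det = (hankel3 Q 0).det := by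
  have hper : Function.Periodic (fun m => (hankel3 Q m).det) 1 := fun m => by
    simp only [hankel3_add_one hrec, det_mul, det_perrinCompanion, mul_one]
  simpa using hper.int_mul_eq n

end Hankel

theorem perrin_det (Q : ℤ → ℤ) (h0 : Q 0 = 3) (h1 : Q 1 = 0) (h2 : Q 2 = 2)
    (hrec : ∀ n : ℤ, Q n = Q (n - 2) + Q (n - 3)) :
    ∀ n : ℤ,
      Matrix.det !![Q (n + 2), Q (n + 1), Q n;
                    Q (n + 1), Q n, Q (n - 1);
                    Q n, Q (n - 1), Q (n - 2)] = -23 := by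
  intro n
  have hm1 : Q (-1) = -1 := by have := hrec 2; norm_num at this; linarith
  have hm2 : Q (-2) = 1 := by have := hrec 1; norm_num at this; linarith
  change (hankel3 Q n).det = -23
  rw [det_hankel3_eq_det_hankel3_zero hrec]
  simp [hankel3, det_fin_three, h0, h1, h2, hm1, hm2]
end

section
/- For the Padovan-Perrin numbers, the determinant det[[S(n+2),S(n+1),S(n)],[S(n+1),S(n),S(n-1)],[S(n),S(n-1),S(n-2)]] equals −1 for all integers n. -/
/-!
Each row `(S (m + 2), S (m + 1), S m)` of the matrix is sent to the next one,
`(S (m + 3), S (m + 2), S (m + 1))`, by right multiplication with the fixed matrix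
`padovanStep`, of determinant `1`. Hence the determinant does not depend on `n`,
and its value at `n = 0` is read off from `S (-2), …, S 2 = -1, 1, 0, 0, 1`.
-/

namespace Padovan

variable {R : Type*} [CommRing R]

/-- Right multiplication by this matrix sends the row `(a, b, c)` to `(b + c, a, b)`. -/
def padovanStep : Matrix (Fin 3) (Fin 3) R := !![0, 1, 0; 1, 0, 1; 1, 0, 0]

theorem det_padovanStep : (padovanStep : Matrix (Fin 3) (Fin 3) R).det = 1 := by
  simp [padovanStep, Matrix.det_fin_three]

def hankelWindow (S : ℤ → R) (n : ℤ) : Matrix (Fin 3) (Fin 3) R :=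
  !![S (n + 2), S (n + 1), S n;
     S (n + 1), S n, S (n - 1);
     S n, S (n - 1), S (n - 2)]

theorem hankelWindow_add_one {S : ℤ → R} (hrec : ∀ n, S n = S (n - 2) + S (n - 3))
    (n : ℤ) : hankelWindow S (n + 1) = hankelWindow S n * padovanStep := by
  have h1 := hrec (n + 1)
  have h2 := hrec (n + 2)
  have h3 := hrec (n + 3)
  simp only [hankelWindow, padovanStep, Matrix.mul_fin_three, mul_zero, mul_one, add_zero,
    zero_add]
  ring_nf at h1 h2 h3 ⊢
  rw [h3, h2, h1]

theorem det_hankelWindow_eq_det_zero {S : ℤ → R} (hrec : ∀ n, S n = S (n - 2) + S (n - 3))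
    (n : ℤ) : (hankelWindow S n).det = (hankelWindow S 0).det := by
  have periodic : Function.Periodic (fun n => (hankelWindow S n).det) 1 := fun n => by
    simp only [hankelWindow_add_one hrec, Matrix.det_mul, det_padovanStep, mul_one]
  simpa using periodic.int_mul_eq n

end Padovan

theorem padovanPerrin_det (S : ℤ → ℤ) (h0 : S 0 = 0) (h1 : S 1 = 0) (h2 : S 2 = 1)
    (hrec : ∀ n : ℤ, S n = S (n - 2) + S (n - 3)) :
    ∀ n : ℤ,
      Matrix.det !![S (n + 2), S (n + 1), S n;
                    S (n + 1), S n, S (n - 1);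
                    S n, S (n - 1), S (n - 2)] = -1 := by
  intro n
  have hm1 : S (-1) = 1 := by have := hrec 2; norm_num at this; linarith
  have hm2 : S (-2) = -1 := by have := hrec 1; norm_num at this; linarith
  rw [← Padovan.hankelWindow, Padovan.det_hankelWindow_eq_det_zero hrec n]
  simp [Padovan.hankelWindow, Matrix.det_fin_three, h0, h1, h2, hm1, hm2]
end

section
/- For the third-order Jacobsthal numbers, the determinant det[[J(n+2),J(n+1),J(n)],[J(n+1),J(n),J(n-1)],[J(n),J(n-1),J(n-2)]] equals −2^(n−1) for all integers n ≥ 2. -/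
/-!
Shifting the window of a third-order linear recurrence `u (n + 3) = a u (n + 2) + b u (n + 1) + c u n`
multiplies its 3×3 Hankel matrix on the left by the companion matrix, whose determinant is `c`.
Hence the Hankel determinants form a geometric sequence of ratio `c`; for the Jacobsthal numbers
`c = 2` and the first determinant is `-2`.
-/

namespace LinearRecurrence3

variable {R : Type*} [CommRing R]

def hankelMatrix (u : ℕ → R) (n : ℕ) : Matrix (Fin 3) (Fin 3) R :=
  !![u (n + 4), u (n + 3), u (n + 2);
     u (n + 3), u (n + 2), u (n + 1);
     u (n + 2), u (n + 1), u n]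

variable {u : ℕ → R} {a b c : R}

theorem hankelMatrix_succ (hu : ∀ n, u (n + 3) = a * u (n + 2) + b * u (n + 1) + c * u n)
    (n : ℕ) : hankelMatrix u (n + 1) = !![a, b, c; 1, 0, 0; 0, 1, 0] * hankelMatrix u n := by
  ext i j
  fin_cases i <;> fin_cases j <;>
    simp [hankelMatrix, Matrix.mul_apply, Fin.sum_univ_three, ← hu]

theorem det_hankelMatrix (hu : ∀ n, u (n + 3) = a * u (n + 2) + b * u (n + 1) + c * u n)
    (n : ℕ) : (hankelMatrix u n).det = c ^ n * (hankelMatrix u 0).det := by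
  induction n with
  | zero => simp
  | succ n ih =>
    have hcompanion : (!![a, b, c; 1, 0, 0; 0, 1, 0] : Matrix (Fin 3) (Fin 3) R).det = c := by
      simp [Matrix.det_fin_three]
    rw [hankelMatrix_succ hu, Matrix.det_mul, hcompanion, ih, pow_succ']
    ring

end LinearRecurrence3

open LinearRecurrence3 in
theorem thirdOrderJacobsthal_det (J : ℕ → ℤ) (h0 : J 0 = 0) (h1 : J 1 = 1) (h2 : J 2 = 1)
    (hrec : ∀ n : ℕ, 3 ≤ n → J n = J (n - 1) + J (n - 2) + 2 * J (n - 3)) :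
    ∀ n : ℕ, 2 ≤ n →
      Matrix.det !![J (n + 2), J (n + 1), J n;
                    J (n + 1), J n, J (n - 1);
                    J n, J (n - 1), J (n - 2)] = -2 ^ (n - 1) := by
  have hJ : ∀ n, J (n + 3) = 1 * J (n + 2) + 1 * J (n + 1) + 2 * J n := fun n => by
    simpa using hrec (n + 3) (by omega)
  have h3 : J 3 = 2 := by rw [hJ 0, h0, h1, h2]; norm_num
  have h4 : J 4 = 5 := by rw [hJ 1, h1, h2, h3]; norm_num
  have hbase : (hankelMatrix J 0).det = -2 := by
    simp [hankelMatrix, Matrix.det_fin_three, h0, h1, h2, h3, h4]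
  rintro n hn
  obtain ⟨m, rfl⟩ : ∃ m, n = m + 2 := ⟨n - 2, by omega⟩
  calc _ = (hankelMatrix J m).det := by
          simp only [hankelMatrix, show m + 2 - 1 = m + 1 by omega, Nat.add_sub_cancel]
    _ = 2 ^ m * -2 := by rw [det_hankelMatrix hJ, hbase]
    _ = -2 ^ (m + 2 - 1) := by rw [Nat.add_sub_assoc (by norm_num)]; ring
end

section
/- For the generalized Tetranacci sequence V(n) = r·V(n-1) + s·V(n-2) + t·V(n-3) + u·V(n-4) with u ≠ 0, extended to all integers, the 4×4 determinant of the matrix whose (i,j) entry is V(n+3−i−j+2) (i.e., the Hankel-type matrix [[V(n+3),V(n+2),V(n+1),V(n)],[V(n+2),V(n+1),V(n),V(n-1)],[V(n+1),V(n),V(n-1),V(n-2)],[V(n),V(n-1),V(n-2),V(n-3)]]) equals (−1)ⁿ·uⁿ times the same determinant evaluated at n = 0, for every integer n. -/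
/-!
Writing `H n` for the Hankel matrix of the statement, the recurrence says that `H (n + 1)` is
obtained from `H n` by multiplying on the left by the companion matrix of the recurrence: its first
row is the recurrence applied columnwise, and its other rows are the first three rows of `H n`.
The companion matrix has determinant `-u`, so `det H (n + 1) = -u * det H n`, and since `u ≠ 0`
this geometric relation can be run in both directions from `n = 0`.
-/

open Matrix

section Hankel

variable {R : Type*} [CommRing R]

def tetranacciCompanion (r s t u : R) : Matrix (Fin 4) (Fin 4) R :=
  !![r, s, t, u; 1, 0, 0, 0; 0, 1, 0, 0; 0, 0, 1, 0]

theorem det_tetranacciCompanion (r s t u : R) : (tetranacciCompanion r s t u).det = -u := by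
  simp [tetranacciCompanion, det_succ_row_zero, Fin.sum_univ_succ, Fin.succAbove, pow_succ]

def tetranacciHankel (V : ℤ → R) (n : ℤ) : Matrix (Fin 4) (Fin 4) R :=
  !![V (n + 3), V (n + 2), V (n + 1), V n;
     V (n + 2), V (n + 1), V n, V (n - 1);
     V (n + 1), V n, V (n - 1), V (n - 2);
     V n, V (n - 1), V (n - 2), V (n - 3)]

variable {r s t u : R} {V : ℤ → R}

theorem tetranacciHankel_add_one
    (hrec : ∀ n : ℤ, V n = r * V (n - 1) + s * V (n - 2) + t * V (n - 3) + u * V (n - 4))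
    (n : ℤ) :
    tetranacciHankel V (n + 1) = tetranacciCompanion r s t u * tetranacciHankel V n := by
  ext i j
  fin_cases i <;> fin_cases j <;>
    simp [tetranacciHankel, tetranacciCompanion, mul_apply, Fin.sum_univ_four] <;>
    first
    | (congr 1; omega)
    | (rw [hrec]; ring_nf)

theorem det_tetranacciHankel_add_one
    (hrec : ∀ n : ℤ, V n = r * V (n - 1) + s * V (n - 2) + t * V (n - 3) + u * V (n - 4))
    (n : ℤ) : (tetranacciHankel V (n + 1)).det = -u * (tetranacciHankel V n).det := by
  rw [tetranacciHankel_add_one hrec, det_mul, det_tetranacciCompanion]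

end Hankel

theorem eq_zpow_mul_of_add_one {K : Type*} [DivisionRing K] {a : K} (ha : a ≠ 0) {D : ℤ → K}
    (hD : ∀ n, D (n + 1) = a * D n) (n : ℤ) : D n = a ^ n * D 0 := by
  induction n using Int.induction_on with
  | zero => simp
  | succ k ih => rw [hD, ih, ← mul_assoc, ← zpow_one_add₀ ha, add_comm]
  | pred k ih =>
    have h := hD (-k - 1)
    rw [sub_add_cancel] at h
    calc D (-(k : ℤ) - 1) = a⁻¹ * D (-k) := by rw [h, inv_mul_cancel_left₀ ha]
      _ = a ^ (-(k : ℤ) - 1) * D 0 := by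
        rw [ih, ← mul_assoc, ← _root_.zpow_neg_one, ← zpow_add₀ ha, neg_add_eq_sub]

theorem tetranacci_simson (r s t u : ℝ) (hu : u ≠ 0) (V : ℤ → ℝ)
    (hrec : ∀ n : ℤ, V n = r * V (n - 1) + s * V (n - 2) + t * V (n - 3) + u * V (n - 4)) :
    ∀ n : ℤ,
      Matrix.det !![V (n + 3), V (n + 2), V (n + 1), V n;
                    V (n + 2), V (n + 1), V n, V (n - 1);
                    V (n + 1), V n, V (n - 1), V (n - 2);
                    V n, V (n - 1), V (n - 2), V (n - 3)] =
        (-1 : ℝ) ^ n * u ^ n *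
          Matrix.det !![V 3, V 2, V 1, V 0;
                        V 2, V 1, V 0, V (-1);
                        V 1, V 0, V (-1), V (-2);
                        V 0, V (-1), V (-2), V (-3)] := by
  intro n
  have h := eq_zpow_mul_of_add_one (D := fun m ↦ (tetranacciHankel V m).det)
    (neg_ne_zero.mpr hu) (det_tetranacciHankel_add_one hrec) n
  rw [neg_eq_neg_one_mul, mul_zpow] at h
  simpa [tetranacciHankel] using h
end

section
/- For the Tetranacci numbers, the 4×4 determinant det[[M(n+3),M(n+2),M(n+1),M(n)],[M(n+2),M(n+1),M(n),M(n-1)],[M(n+1),M(n),M(n-1),M(n-2)],[M(n),M(n-1),M(n-2),M(n-3)]] equals (−1)^(n−1) for all integers n. -/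
/-!
The Hankel matrix of a solution of a linear recurrence of order four is shifted by left
multiplication with the companion matrix of the recurrence. For the Tetranacci recurrence that
matrix has determinant `-1`, so the determinants alternate in sign; running the recurrence
backwards gives `M (-1) = M (-2) = 0` and `M (-3) = 1`, and the determinant at `n = 0` is `-1`.
-/

def hankel4 {α : Type*} (f : ℤ → α) (n : ℤ) : Matrix (Fin 4) (Fin 4) α :=
  !![f (n + 3), f (n + 2), f (n + 1), f n;
     f (n + 2), f (n + 1), f n, f (n - 1);
     f (n + 1), f n, f (n - 1), f (n - 2);
     f n, f (n - 1), f (n - 2), f (n - 3)]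

def companion4 {R : Type*} [Zero R] [One R] (a b c d : R) : Matrix (Fin 4) (Fin 4) R :=
  !![a, b, c, d; 1, 0, 0, 0; 0, 1, 0, 0; 0, 0, 1, 0]

section CommRing

variable {R : Type*} [CommRing R]

theorem det_companion4 (a b c d : R) : (companion4 a b c d).det = -d := by
  simp [companion4, Matrix.det_succ_row_zero, Fin.sum_univ_succ, Fin.succAbove, pow_succ]

theorem hankel4_add_one {f : ℤ → R} {a b c d : R}
    (hf : ∀ n, f n = a * f (n - 1) + b * f (n - 2) + c * f (n - 3) + d * f (n - 4)) (n : ℤ) :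
    hankel4 f (n + 1) = companion4 a b c d * hankel4 f n := by
  ext i j
  fin_cases i
  · fin_cases j <;> simp [hankel4, companion4, Matrix.mul_apply, Fin.sum_univ_four] <;>
      nth_rewrite 1 [hf] <;> ring_nf
  all_goals
    fin_cases j <;> simp [hankel4, companion4, Matrix.mul_apply, Fin.sum_univ_four] <;> ring_nf

theorem det_hankel4_add_one {f : ℤ → R} {a b c d : R}
    (hf : ∀ n, f n = a * f (n - 1) + b * f (n - 2) + c * f (n - 3) + d * f (n - 4)) (n : ℤ) :
    (hankel4 f (n + 1)).det = -d * (hankel4 f n).det := by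
  rw [hankel4_add_one hf, Matrix.det_mul, det_companion4]

end CommRing

theorem eq_neg_one_zpow_mul_of_add_one_eq_neg {R : Type*} [Ring R] {u : ℤ → R}
    (h : ∀ n, u (n + 1) = -u n) (n : ℤ) :
    u n = ((-1 : Rˣ) ^ n : Rˣ) * u 0 := by
  induction n using Int.induction_on with
  | zero => simp
  | succ k ih => rw [h, ih, zpow_add_one]; simp
  | pred k ih => rw [← neg_neg (u _), ← h, sub_add_cancel, ih, zpow_sub_one]; simp

theorem tetranacci_det (M : ℤ → ℤ) (h0 : M 0 = 0) (h1 : M 1 = 1) (h2 : M 2 = 1) (h3 : M 3 = 2)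
    (hrec : ∀ n : ℤ, M n = M (n - 1) + M (n - 2) + M (n - 3) + M (n - 4)) :
    ∀ n : ℤ,
      Matrix.det !![M (n + 3), M (n + 2), M (n + 1), M n;
                    M (n + 2), M (n + 1), M n, M (n - 1);
                    M (n + 1), M n, M (n - 1), M (n - 2);
                    M n, M (n - 1), M (n - 2), M (n - 3)] =
        ((-1 : ℤˣ) ^ (n - 1) : ℤˣ) := by
  have hm1 : M (-1) = 0 := by have h := hrec 3; norm_num at h; linarith
  have hm2 : M (-2) = 0 := by have h := hrec 2; norm_num at h; linarith
  have hm3 : M (-3) = 1 := by have h := hrec 1; norm_num at h; linarith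
  have hdet0 : (hankel4 M 0).det = -1 := by
    simp [hankel4, Matrix.det_succ_row_zero, Fin.sum_univ_succ, Fin.succAbove,
      h0, h1, h2, h3, hm1, hm2, hm3]
  have hstep (n : ℤ) : (hankel4 M (n + 1)).det = -(hankel4 M n).det := by
    simpa using det_hankel4_add_one (f := M) (a := 1) (b := 1) (c := 1) (d := 1)
      (by simpa using hrec) n
  intro n
  change (hankel4 M n).det = _
  rw [eq_neg_one_zpow_mul_of_add_one_eq_neg (u := fun n => (hankel4 M n).det) hstep n, hdet0,
    zpow_sub_one]
  simp
end

section
/- For the Pentanacci numbers, the 5×5 Hankel-type determinant det[[P(n+4),P(n+3),P(n+2),P(n+1),P(n)],[P(n+3),P(n+2),P(n+1),P(n),P(n-1)],[P(n+2),P(n+1),P(n),P(n-1),P(n-2)],[P(n+1),P(n),P(n-1),P(n-2),P(n-3)],[P(n),P(n-1),P(n-2),P(n-3),P(n-4)]] equals 1 for all integers n. -/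
/-!
Let `H n` be the Hankel matrix `(P (n + 4 - i - j))ᵢⱼ`. The recurrence says exactly that
`H (n + 1) = C * H n`, where `C` is the companion matrix of `X⁵ - X⁴ - X³ - X² - X - 1`, and
`det C = 1`, so `det (H n)` does not depend on `n`. Running the recurrence backwards gives
`P (-4), …, P (-1) = 1, 0, 0, 0`, which makes `H 0` anti-triangular up to its last row, with
determinant `1`.
-/

namespace Pentanacci

variable {R : Type*}

def hankel (P : ℤ → R) (n : ℤ) : Matrix (Fin 5) (Fin 5) R :=
  Matrix.of fun i j => P (n + 4 - i - j)

theorem hankel_eq (P : ℤ → R) (n : ℤ) :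
    hankel P n = !![P (n + 4), P (n + 3), P (n + 2), P (n + 1), P n;
                    P (n + 3), P (n + 2), P (n + 1), P n, P (n - 1);
                    P (n + 2), P (n + 1), P n, P (n - 1), P (n - 2);
                    P (n + 1), P n, P (n - 1), P (n - 2), P (n - 3);
                    P n, P (n - 1), P (n - 2), P (n - 3), P (n - 4)] := by
  ext i j
  fin_cases i <;> fin_cases j <;> simp [hankel] <;> ring_nf

variable [CommRing R]

def companion : Matrix (Fin 5) (Fin 5) R :=
  !![1, 1, 1, 1, 1; 1, 0, 0, 0, 0; 0, 1, 0, 0, 0; 0, 0, 1, 0, 0; 0, 0, 0, 1, 0]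

theorem det_companion : (companion : Matrix (Fin 5) (Fin 5) R).det = 1 := by
  simp [companion, Matrix.det_succ_row_zero, Fin.sum_univ_succ, Fin.succAbove, pow_succ]

variable {P : ℤ → R}

theorem hankel_add_one
    (hrec : ∀ n, P n = P (n - 1) + P (n - 2) + P (n - 3) + P (n - 4) + P (n - 5)) (n : ℤ) :
    hankel P (n + 1) = companion * hankel P n := by
  ext i j
  fin_cases i <;>
    simp only [hankel, companion, Matrix.mul_apply, Matrix.of_apply, Fin.sum_univ_five,
      Matrix.cons_val', Matrix.cons_val_fin_one, Matrix.cons_val, Matrix.cons_val_zero,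
      Matrix.cons_val_one, Fin.isValue, Fin.zero_eta, Fin.mk_one, Fin.reduceFinMk,
      Fin.coe_ofNat_eq_mod, Nat.reduceMod, Nat.zero_mod, Nat.one_mod, Nat.mod_succ, Nat.cast_ofNat,
      Nat.cast_one, CharP.cast_eq_zero, sub_zero, one_mul, zero_mul, add_zero, zero_add,
      add_sub_cancel_right]
  · rw [hrec]; ring_nf
  all_goals ring_nf

theorem det_hankel_add_one
    (hrec : ∀ n, P n = P (n - 1) + P (n - 2) + P (n - 3) + P (n - 4) + P (n - 5)) (n : ℤ) :
    (hankel P (n + 1)).det = (hankel P n).det := by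
  rw [hankel_add_one hrec, Matrix.det_mul, det_companion, one_mul]

theorem det_hankel_eq_det_hankel_zero
    (hrec : ∀ n, P n = P (n - 1) + P (n - 2) + P (n - 3) + P (n - 4) + P (n - 5)) (n : ℤ) :
    (hankel P n).det = (hankel P 0).det := by
  induction n using Int.induction_on with
  | zero => rfl
  | succ k ih => rw [det_hankel_add_one hrec, ih]
  | pred k ih => rw [← ih, ← det_hankel_add_one hrec, sub_add_cancel]

theorem det_hankel_zero (hm4 : P (-4) = 1) (hm3 : P (-3) = 0) (hm2 : P (-2) = 0)
    (hm1 : P (-1) = 0) (h0 : P 0 = 0) (h1 : P 1 = 1) (h2 : P 2 = 1) (h3 : P 3 = 2)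
    (h4 : P 4 = 4) :
    (hankel P 0).det = 1 := by
  rw [hankel_eq]
  simp [hm4, hm3, hm2, hm1, h0, h1, h2, h3, h4, Matrix.det_succ_row_zero, Fin.sum_univ_succ,
    Fin.succAbove, pow_succ]

end Pentanacci

open Pentanacci in
theorem pentanacci_det (P : ℤ → ℤ) (h0 : P 0 = 0) (h1 : P 1 = 1) (h2 : P 2 = 1)
    (h3 : P 3 = 2) (h4 : P 4 = 4)
    (hrec : ∀ n : ℤ, P n = P (n - 1) + P (n - 2) + P (n - 3) + P (n - 4) + P (n - 5)) :
    ∀ n : ℤ,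
      Matrix.det !![P (n + 4), P (n + 3), P (n + 2), P (n + 1), P n;
                    P (n + 3), P (n + 2), P (n + 1), P n, P (n - 1);
                    P (n + 2), P (n + 1), P n, P (n - 1), P (n - 2);
                    P (n + 1), P n, P (n - 1), P (n - 2), P (n - 3);
                    P n, P (n - 1), P (n - 2), P (n - 3), P (n - 4)] = 1 := by
  intro n
  have hm1 : P (-1) = 0 := by have h := hrec 4; norm_num at h; linarith
  have hm2 : P (-2) = 0 := by have h := hrec 3; norm_num at h; linarith
  have hm3 : P (-3) = 0 := by have h := hrec 2; norm_num at h; linarith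
  have hm4 : P (-4) = 1 := by have h := hrec 1; norm_num at h; linarith
  rw [← hankel_eq, det_hankel_eq_det_hankel_zero hrec]
  exact det_hankel_zero hm4 hm3 hm2 hm1 h0 h1 h2 h3 h4
end

section
/- Let m ≥ 2 and let V : ℤ → ℝ satisfy the m-th order recurrence V(n) = Σ_{i=1}^{m} r_i·V(n−i) with r_m ≠ 0. Define f(n) as the determinant of the m×m Hankel-type matrix whose (i,j) entry is V(n + m − i − j + 1) for 1 ≤ i,j ≤ m. Then for all integers n, f(n) = y(n)·r_mⁿ·f(0), where y(n) = 1 if m is odd and y(n) = (−1)ⁿ if m is even. -/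
/-!
Write `M n` for the matrix of the theorem. By the recurrence, row `0` of `M (n + 1)` is the
combination `∑ l, r (l + 1) • (row l of M n)`, and row `i ≥ 1` of `M (n + 1)` is row `i - 1` of
`M n`. So `M (n + 1)` is `M n` with its rows rotated cyclically, except that the row moved to the
top is replaced by that combination. Multilinearity kills every term of the combination except
the one with coefficient `r m`, and the cyclic rotation contributes its sign `(-1) ^ (m - 1)`.
Hence `det M (n + 1) = (-1) ^ (m - 1) * r m * det M n`, and iterating in both directions
(`r m ≠ 0`) gives the claim.
-/

open Matrix Finset

theorem Finset.sum_Icc_one_eq_sum_fin {M : Type*} [AddCommMonoid M] (m : ℕ) (f : ℕ → M) :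
    ∑ i ∈ Icc 1 m, f i = ∑ i : Fin m, f (i + 1) := by
  rw [Fin.sum_univ_eq_sum_range (fun i => f (i + 1)), range_eq_Ico, sum_Ico_add' f, zero_add,
    Ico_add_one_right_eq_Icc]

theorem eq_zpow_mul_of_forall_succ {G₀ : Type*} [CommGroupWithZero G₀] {f : ℤ → G₀} {c : G₀}
    (hc : c ≠ 0) (h : ∀ n, f (n + 1) = c * f n) (n : ℤ) : f n = c ^ n * f 0 := by
  induction n using Int.induction_on with
  | zero => simp
  | succ n ih => rw [h, ih, zpow_add_one₀ hc]; ac_rfl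
  | pred n ih =>
    have hprev : f (-n - 1) = c⁻¹ * f (-n) := by
      rw [← sub_add_cancel (-n : ℤ) 1, h, add_sub_cancel_right, inv_mul_cancel_left₀ hc]
    rw [hprev, ih, zpow_sub_one₀ hc]; ac_rfl

theorem neg_one_pow_pred_zpow {K : Type*} [DivisionRing K] {m : ℕ} (hm : m ≠ 0) (n : ℤ) :
    ((-1 : K) ^ (m - 1)) ^ n = if Odd m then 1 else (-1) ^ n := by
  rcases Nat.even_or_odd m with he | ho
  · have : Odd (m - 1) := Nat.Even.sub_odd (Nat.one_le_iff_ne_zero.mpr hm) he odd_one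
    rw [this.neg_one_pow, if_neg (Nat.not_odd_iff_even.mpr he)]
  · rw [(Nat.Odd.sub_odd ho odd_one).neg_one_pow, _root_.one_zpow, if_pos ho]

section

variable {R : Type*} {m : ℕ}

def hankelWindow (m : ℕ) (V : ℤ → R) (n : ℤ) : Matrix (Fin m) (Fin m) R :=
  of fun i j => V (n + m - 1 - i - j)

theorem hankelWindow_succ_apply_of_ne_zero [NeZero m] (V : ℤ → R) (n : ℤ) {i : Fin m}
    (hi : i ≠ 0) (j : Fin m) : hankelWindow m V (n + 1) i j = hankelWindow m V n (i - 1) j := by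
  simp only [hankelWindow, of_apply, Fin.val_sub_one_of_ne_zero hi]
  congr 1
  have : 1 ≤ (i : ℕ) := Nat.one_le_iff_ne_zero.mpr (Fin.val_ne_zero_iff.mpr hi)
  push_cast [this]
  ring

variable [CommRing R]

theorem hankelWindow_succ_zero [NeZero m] {r : ℕ → R} {V : ℤ → R}
    (hrec : ∀ n : ℤ, V n = ∑ i ∈ Icc 1 m, r i * V (n - i)) (n : ℤ) :
    hankelWindow m V (n + 1) 0 = ∑ l : Fin m, r (l + 1) • hankelWindow m V n l := by
  ext j
  rw [hankelWindow, of_apply, hrec, sum_Icc_one_eq_sum_fin, Finset.sum_apply]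
  refine Finset.sum_congr rfl fun l _ => ?_
  simp only [Pi.smul_apply, smul_eq_mul, hankelWindow, of_apply]
  congr 2
  push_cast [Fin.val_zero]
  ring

theorem det_hankelWindow_succ [NeZero m] {r : ℕ → R} {V : ℤ → R}
    (hrec : ∀ n : ℤ, V n = ∑ i ∈ Icc 1 m, r i * V (n - i)) (n : ℤ) :
    (hankelWindow m V (n + 1)).det = (-1) ^ (m - 1) * r m * (hankelWindow m V n).det := by
  have hlast : ((finRotate m).symm 0 : ℕ) + 1 = m := by
    obtain ⟨k, rfl⟩ := Nat.exists_eq_add_one.mpr (NeZero.pos m)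
    simp [Fin.coe_neg_one]
  set σ := finRotate m
  set P := (hankelWindow m V n).submatrix σ.symm id
  have hshift : hankelWindow m V (n + 1) = P.updateRow 0 (∑ l, r (σ.symm l + 1) • P l) := by
    funext i
    rcases eq_or_ne i 0 with rfl | hi
    · rw [updateRow_self]
      exact (hankelWindow_succ_zero hrec n).trans (Equiv.sum_comp σ.symm _).symm
    · funext j
      rw [updateRow_ne hi, hankelWindow_succ_apply_of_ne_zero V n hi]
      simp [P, σ]
  rw [hshift, det_updateRow_sum, det_permute, Equiv.Perm.sign_symm, sign_finRotate, hlast]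
  push_cast
  ring

end

theorem mStep_simson (m : ℕ) (hm : 2 ≤ m) (r : ℕ → ℝ) (hr : r m ≠ 0) (V : ℤ → ℝ)
    (hrec : ∀ n : ℤ, V n = ∑ i ∈ Finset.Icc 1 m, r i * V (n - i)) :
    ∀ n : ℤ,
      Matrix.det (Matrix.of fun i j : Fin m => V (n + m - 1 - i - j)) =
        (if Odd m then 1 else (-1 : ℝ) ^ n) * r m ^ n *
          Matrix.det (Matrix.of fun i j : Fin m => V ((m : ℤ) - 1 - i - j)) := by
  intro n
  have : NeZero m := ⟨by omega⟩
  have hc : (-1 : ℝ) ^ (m - 1) * r m ≠ 0 := mul_ne_zero (pow_ne_zero _ (by norm_num)) hr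
  have h := eq_zpow_mul_of_forall_succ (f := fun n => (hankelWindow m V n).det) hc
    (det_hankelWindow_succ hrec) n
  rw [mul_zpow, neg_one_pow_pred_zpow (NeZero.ne m)] at h
  simpa only [hankelWindow, zero_add] using h
end
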